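/- arXiv:2412.11604 — 2 statements merged into one kernel-verified Lean document; each statement's English description precedes it below -/
import Mathlib

section
/- Let A be an associative ℂ-algebra with unit, n ≥ 1, and write [a,b] = ab - ba. Suppose given elements c^L_{ij}, X_{ij}, Y_{ij} ∈ A (1 ≤ i,j ≤ n) with c^L_{ij} = c^L_{ji}, and an invertible element C ∈ A, such that: [X_{ij},X_{kl}] = 0, [Y_{ij},Y_{kl}] = 0, [X_{ij},Y_{kl}] = δ_{ik}δ_{jl}C, C commutes with all listed elements, [c^L_{ij}, X_{kl}] = 0, and [c^L_{ij}, Y_{kl}] = δ_{jk}X_{il} + δ_{ik}X_{jl}. Then the elements ĉ^L_{ij} := c^L_{ij} - C^{-1}·Σ_{m=1}^{n} X_{jm}X_{im} satisfy [ĉ^L_{ij}, X_{kl}] = 0 and [ĉ^L_{ij}, Y_{kl}] = 0 for all i,j,k,l. -/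
/-!
Subtracting `C⁻¹ Σ_m X_{jm} X_{im}` is designed to cancel the action of `c^L_{ij}` on the `Y`'s:
by the Leibniz rule and `[X_{ab}, Y_{kl}] = δ_{ak} δ_{bl} C`, the quadratic element
`Σ_m X_{jm} X_{im}` has commutator `C (δ_{jk} X_{il} + δ_{ik} X_{jl})` with `Y_{kl}`, which is
exactly `C [c^L_{ij}, Y_{kl}]`. It commutes with the `X`'s, as `c^L_{ij}` does.
-/

attribute [local instance] LieRing.ofAssociativeRing

theorem Ring.mul_lie {R : Type*} [Ring R] (a b y : R) : ⁅a * b, y⁆ = a * ⁅b, y⁆ + ⁅a, y⁆ * b := by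
  simp only [Ring.lie_def]
  noncomm_ring

theorem lie_sum_mul_of_heisenberg {R : Type*} [Ring R] {n : ℕ} (X Y : Fin n → Fin n → R) (C : R)
    (hXY : ∀ i j k l, ⁅X i j, Y k l⁆ = if i = k ∧ j = l then C else 0)
    (hCX : ∀ i j, Commute C (X i j)) (i j k l : Fin n) :
    ⁅∑ m, X j m * X i m, Y k l⁆
      = C * ((if j = k then X i l else 0) + (if i = k then X j l else 0)) := by
  simp only [sum_lie, Ring.mul_lie, hXY, ite_and, mul_ite, ite_mul, mul_zero, zero_mul,
    Finset.sum_add_distrib]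
  split_ifs <;> simp [mul_add, ← (hCX j l).eq, add_comm]

theorem stmt_7_general {A : Type*} [Ring A] (n : ℕ)
    (c X Y : Fin n → Fin n → A) (C Cinv : A)
    (hC : C * Cinv = 1) (hC' : Cinv * C = 1)
    (hXX : ∀ i j k l, X i j * X k l - X k l * X i j = 0)
    (hXY : ∀ i j k l, X i j * Y k l - Y k l * X i j = if i = k ∧ j = l then C else 0)
    (hCX : ∀ i j, C * X i j - X i j * C = 0)
    (hCY : ∀ i j, C * Y i j - Y i j * C = 0)
    (hcX : ∀ i j k l, c i j * X k l - X k l * c i j = 0)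
    (hcY : ∀ i j k l, c i j * Y k l - Y k l * c i j
      = (if j = k then X i l else 0) + (if i = k then X j l else 0)) :
    ∀ i j k l,
      ((c i j - Cinv * ∑ m, X j m * X i m) * X k l
          - X k l * (c i j - Cinv * ∑ m, X j m * X i m) = 0) ∧
      ((c i j - Cinv * ∑ m, X j m * X i m) * Y k l
          - Y k l * (c i j - Cinv * ∑ m, X j m * X i m) = 0) := by
  have hCinv (a : A) (h : Commute C a) : Commute Cinv a :=
    h.units_inv_left (u := ⟨C, Cinv, hC, hC'⟩)
  have hXX' i j k l : Commute (X i j) (X k l) := sub_eq_zero.mp (hXX i j k l)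
  have hCX' i j : Commute C (X i j) := sub_eq_zero.mp (hCX i j)
  intro i j k l
  constructor
  · have hS : Commute (∑ m, X j m * X i m) (X k l) :=
      Commute.sum_left _ _ _ fun m _ => (hXX' j m k l).mul_left (hXX' i m k l)
    have hcX' : Commute (c i j) (X k l) := sub_eq_zero.mp (hcX i j k l)
    exact (hcX'.sub_left ((hCinv _ (hCX' k l)).mul_left hS)).lie_eq
  · have hCinvY : Commute Cinv (Y k l) := hCinv _ (sub_eq_zero.mp (hCY k l))
    change ⁅c i j - Cinv * _, Y k l⁆ = 0
    rw [sub_lie, Ring.mul_lie, hCinvY.lie_eq, zero_mul, add_zero, lie_sum_mul_of_heisenberg X Y C hXY hCX',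
      ← mul_assoc, hC', one_mul, sub_eq_zero]
    exact hcY i j k l

/-- In an associative ℂ-algebra with Heisenberg generators `X_{ij}, Y_{ij}, C`
(`C` invertible, central) and symmetric generators `c^L_{ij}` with `[c^L_{ij}, X_{kl}] = 0`,
`[c^L_{ij}, Y_{kl}] = δ_{jk}X_{il} + δ_{ik}X_{jl}`, the shifted generators
`ĉ^L_{ij} = c^L_{ij} - C⁻¹ Σ_m X_{jm} X_{im}` commute with all `X_{kl}`, `Y_{kl}`. -/
theorem stmt_7 {A : Type*} [Ring A] [Algebra ℂ A] (n : ℕ) (hn : 1 ≤ n)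
    (c X Y : Fin n → Fin n → A) (C Cinv : A)
    (hcsym : ∀ i j, c i j = c j i)
    (hC : C * Cinv = 1) (hC' : Cinv * C = 1)
    (hXX : ∀ i j k l, X i j * X k l - X k l * X i j = 0)
    (hYY : ∀ i j k l, Y i j * Y k l - Y k l * Y i j = 0)
    (hXY : ∀ i j k l, X i j * Y k l - Y k l * X i j = if i = k ∧ j = l then C else 0)
    (hCX : ∀ i j, C * X i j - X i j * C = 0)
    (hCY : ∀ i j, C * Y i j - Y i j * C = 0)
    (hCc : ∀ i j, C * c i j - c i j * C = 0)
    (hcX : ∀ i j k l, c i j * X k l - X k l * c i j = 0)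
    (hcY : ∀ i j k l, c i j * Y k l - Y k l * c i j
      = (if j = k then X i l else 0) + (if i = k then X j l else 0)) :
    ∀ i j k l,
      ((c i j - Cinv * ∑ m, X j m * X i m) * X k l
          - X k l * (c i j - Cinv * ∑ m, X j m * X i m) = 0) ∧
      ((c i j - Cinv * ∑ m, X j m * X i m) * Y k l
          - Y k l * (c i j - Cinv * ∑ m, X j m * X i m) = 0) :=
  stmt_7_general n c X Y C Cinv hC hC' hXX hXY hCX hCY hcX hcY
end

section
/- Let A be an associative ℂ-algebra with unit, n ≥ 1, and write [a,b] = ab - ba. Suppose given elements c^R_{ij}, X_{ij}, Y_{ij} ∈ A (1 ≤ i,j ≤ n) with c^R_{ij} = c^R_{ji}, and an invertible element C ∈ A, such that: [X_{ij},X_{kl}] = 0, [Y_{ij},Y_{kl}] = 0, [X_{ij},Y_{kl}] = δ_{ik}δ_{jl}C, C commutes with all listed elements, [c^R_{ij}, Y_{kl}] = 0, and [c^R_{ij}, X_{kl}] = -δ_{il}Y_{kj} - δ_{jl}Y_{ki}. Then the elements ĉ^R_{ij} := c^R_{ij} - C^{-1}·Σ_{m=1}^{n} Y_{mi}Y_{mj}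 satisfy [ĉ^R_{ij}, X_{kl}] = 0 and [ĉ^R_{ij}, Y_{kl}] = 0 for all i,j,k,l. -/
/-!
Since `C` is central and invertible, `⁅·, X_{kl}⁆` acts on `C⁻¹ Σ_m Y_{mi} Y_{mj}` as a derivation
killing `C⁻¹`; by the Heisenberg relations each factor `Y_{mi}` contributes `-δ_{mk} δ_{il} C`,
so the commutator is `-δ_{il} Y_{kj} - δ_{jl} Y_{ki}`, exactly `⁅c^R_{ij}, X_{kl}⁆`. The
`Y`'s commute with each other and with `c^R_{ij}`, so `ĉ^R_{ij}` commutes with them too.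
-/

open Finset

section Commutator

attribute [local instance] LieRing.ofAssociativeRing

variable {A : Type*} [Ring A]

theorem Ring.mul_lie_s9 (a b x : A) : ⁅a * b, x⁆ = a * ⁅b, x⁆ + ⁅a, x⁆ * b := by
  simp only [Ring.lie_def]
  noncomm_ring

theorem Commute.mul_lie_of_left {u x : A} (h : Commute u x) (a : A) :
    ⁅u * a, x⁆ = u * ⁅a, x⁆ := by
  rw [Ring.mul_lie_s9, h.lie_eq, zero_mul, add_zero]

variable {n : ℕ} (c X Y : Fin n → Fin n → A)

theorem lie_sum_mul_X (C : A)
    (hXY : ∀ i j k l, ⁅X i j, Y k l⁆ = if i = k ∧ j = l then C else 0) (i j k l : Fin n) :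
    ⁅∑ m, Y m i * Y m j, X k l⁆
      = -((if i = l then C * Y k j else 0) + (if j = l then Y k i * C else 0)) := by
  have hYX (a b) : ⁅Y a b, X k l⁆ = -(if a = k ∧ b = l then C else 0) := by
    rw [← lie_skew, hXY]
    simp only [@eq_comm _ a, @eq_comm _ b]
  simp only [sum_lie, Ring.mul_lie_s9, hYX, mul_neg, neg_mul, mul_ite, ite_mul, mul_zero, zero_mul,
    ite_and, sum_add_distrib, sum_neg_distrib, sum_ite_eq', mem_univ, if_true, neg_add_rev]

theorem lie_sum_mul_Y (hYY : ∀ i j k l, ⁅Y i j, Y k l⁆ = 0) (i j k l : Fin n) :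
    ⁅∑ m, Y m i * Y m j, Y k l⁆ = 0 := by
  simp only [sum_lie, Ring.mul_lie_s9, hYY, mul_zero, zero_mul, add_zero, sum_const_zero]

/-- The paper's `ĉ^R_{ij}`, with `Cinv` standing for `C⁻¹`. -/
def shiftedGen (Cinv : A) (i j : Fin n) : A :=
  c i j - Cinv * ∑ m, Y m i * Y m j

variable (C : Aˣ)

theorem lie_shiftedGen_X
    (hXY : ∀ i j k l, ⁅X i j, Y k l⁆ = if i = k ∧ j = l then (C : A) else 0)
    (hCX : ∀ k l, Commute (C : A) (X k l)) (hCY : ∀ k l, Commute (C : A) (Y k l))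
    (hcX : ∀ i j k l, ⁅c i j, X k l⁆
      = -(if i = l then Y k j else 0) - (if j = l then Y k i else 0))
    (i j k l : Fin n) :
    ⁅shiftedGen c Y ↑C⁻¹ i j, X k l⁆ = 0 := by
  have cancel_left : ↑C⁻¹ * (↑C * Y k j) = Y k j := C.inv_mul_cancel_left _
  have cancel_right : ↑C⁻¹ * (Y k i * ↑C) = Y k i := by
    rw [((hCY k i).units_inv_left).left_comm, C.inv_mul, mul_one]
  rw [shiftedGen, sub_lie, ((hCX k l).units_inv_left).mul_lie_of_left,
    lie_sum_mul_X X Y _ hXY, hcX]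
  split_ifs <;> simp only [cancel_left, cancel_right, mul_neg, mul_add, mul_zero] <;> abel

theorem lie_shiftedGen_Y (hYY : ∀ i j k l, ⁅Y i j, Y k l⁆ = 0)
    (hCY : ∀ k l, Commute (C : A) (Y k l)) (hcY : ∀ i j k l, ⁅c i j, Y k l⁆ = 0)
    (i j k l : Fin n) :
    ⁅shiftedGen c Y ↑C⁻¹ i j, Y k l⁆ = 0 := by
  rw [shiftedGen, sub_lie, ((hCY k l).units_inv_left).mul_lie_of_left, lie_sum_mul_Y Y hYY,
    hcY, mul_zero, sub_zero]

end Commutator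

theorem stmt_9_general {A : Type*} [Ring A] (n : ℕ)
    (c X Y : Fin n → Fin n → A) (C Cinv : A)
    (hC : C * Cinv = 1) (hC' : Cinv * C = 1)
    (hYY : ∀ i j k l, Y i j * Y k l - Y k l * Y i j = 0)
    (hXY : ∀ i j k l, X i j * Y k l - Y k l * X i j = if i = k ∧ j = l then C else 0)
    (hCX : ∀ i j, C * X i j - X i j * C = 0)
    (hCY : ∀ i j, C * Y i j - Y i j * C = 0)
    (hcY : ∀ i j k l, c i j * Y k l - Y k l * c i j = 0)
    (hcX : ∀ i j k l, c i j * X k l - X k l * c i j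
      = -(if i = l then Y k j else 0) - (if j = l then Y k i else 0)) :
    ∀ i j k l,
      ((c i j - Cinv * ∑ m, Y m i * Y m j) * X k l
          - X k l * (c i j - Cinv * ∑ m, Y m i * Y m j) = 0) ∧
      ((c i j - Cinv * ∑ m, Y m i * Y m j) * Y k l
          - Y k l * (c i j - Cinv * ∑ m, Y m i * Y m j) = 0) := by
  let u : Aˣ := ⟨C, Cinv, hC, hC'⟩
  have hCX' (k l) : Commute (u : A) (X k l) := commute_iff_lie_eq.2 (hCX k l)
  have hCY' (k l) : Commute (u : A) (Y k l) := commute_iff_lie_eq.2 (hCY k l)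
  intro i j k l
  exact ⟨lie_shiftedGen_X c X Y u hXY hCX' hCY' hcX i j k l,
    lie_shiftedGen_Y c Y u hYY hCY' hcY i j k l⟩

/-- In an associative ℂ-algebra with Heisenberg generators `X_{ij}, Y_{ij}, C`
(`C` invertible, central) and symmetric generators `c^R_{ij}` with `[c^R_{ij}, Y_{kl}] = 0`,
`[c^R_{ij}, X_{kl}] = -δ_{il}Y_{kj} - δ_{jl}Y_{ki}`, the shifted generators
`ĉ^R_{ij} = c^R_{ij} - C⁻¹ Σ_m Y_{mi} Y_{mj}` commute with all `X_{kl}`, `Y_{kl}`. -/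
theorem stmt_9 {A : Type*} [Ring A] [Algebra ℂ A] (n : ℕ) (hn : 1 ≤ n)
    (c X Y : Fin n → Fin n → A) (C Cinv : A)
    (hcsym : ∀ i j, c i j = c j i)
    (hC : C * Cinv = 1) (hC' : Cinv * C = 1)
    (hXX : ∀ i j k l, X i j * X k l - X k l * X i j = 0)
    (hYY : ∀ i j k l, Y i j * Y k l - Y k l * Y i j = 0)
    (hXY : ∀ i j k l, X i j * Y k l - Y k l * X i j = if i = k ∧ j = l then C else 0)
    (hCX : ∀ i j, C * X i j - X i j * C = 0)
    (hCY : ∀ i j, C * Y i j - Y i j * C = 0)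
    (hCc : ∀ i j, C * c i j - c i j * C = 0)
    (hcY : ∀ i j k l, c i j * Y k l - Y k l * c i j = 0)
    (hcX : ∀ i j k l, c i j * X k l - X k l * c i j
      = -(if i = l then Y k j else 0) - (if j = l then Y k i else 0)) :
    ∀ i j k l,
      ((c i j - Cinv * ∑ m, Y m i * Y m j) * X k l
          - X k l * (c i j - Cinv * ∑ m, Y m i * Y m j) = 0) ∧
      ((c i j - Cinv * ∑ m, Y m i * Y m j) * Y k l
          - Y k l * (c i j - Cinv * ∑ m, Y m i * Y m j) = 0) :=
  stmt_9_general n c X Y C Cinv hC hC' hYY hXY hCX hCY hcY hcX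
end
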